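/- Let T > 0 and p ∈ [1,∞). Define D ⊆ L^p(0,T) as the set of all equivalence classes u such that there exists s ∈ [0,T] with u = χ_{(0,s)} almost everywhere or u = χ_{(s,T)} almost everywhere (equivalently, D is the set of binary-valued functions of bounded variation on (0,T) with BV-seminorm at most 1, i.e., with at most one switching). Then the function u* defined by u*(t) = 1/2 for t ∈ (T/3, 2T/3) and u*(t) = 0 otherwise does NOT belong to the closure in L^p(0,T) of the convex hull of D. -/

import Mathlib

/-!
Integration against the weight `g = 1 - 2 χ_(T/3, 2T/3)` is a continuous linear functional on
`L^p(0,T)`, by Hölder's inequality, since `g` is bounded. On `χ_J` it takes the value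
`|J| - 2 |J ∩ (T/3, 2T/3)|`, and an interval `J` with an endpoint at `0` or `T` spends at most
half of its length in the middle third, so the functional is nonnegative on every switching
pattern and hence on the closed convex hull. Yet its value at `u* = ½ χ_(T/3, 2T/3)` is
`-T/6`.
-/

open MeasureTheory Set Filter
open scoped ENNReal

theorem ContinuousLinearMap.nonneg_of_mem_closure_convexHull {E : Type*} [AddCommGroup E]
    [Module ℝ E] [TopologicalSpace E] (F : E →L[ℝ] ℝ) {S : Set E} (hS : ∀ u ∈ S, 0 ≤ F u)
    {w : E} (hw : w ∈ closure (convexHull ℝ S)) : 0 ≤ F w :=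
  closure_minimal (convexHull_min hS ((convex_Ici 0).linear_preimage F.toLinearMap))
    (isClosed_Ici.preimage F.continuous) hw

namespace MeasureTheory

variable {α : Type*} [MeasurableSpace α] {μ : Measure α}

section Pairing

variable (p : ℝ≥0∞) {q : ℝ≥0∞} [Fact (1 ≤ p)] [Fact (1 ≤ q)] [p.HolderConjugate q]

noncomputable def Lp.integralMulCLM {g : α → ℝ} (hg : MemLp g q μ) : Lp ℝ p μ →L[ℝ] ℝ :=
  ((ContinuousLinearMap.mul ℝ ℝ).lpPairing μ p q).flip (hg.toLp g)

theorem Lp.integralMulCLM_apply {g : α → ℝ} (hg : MemLp g q μ) (u : Lp ℝ p μ) :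
    integralMulCLM p hg u = ∫ x, u x * g x ∂μ := by
  rw [integralMulCLM, ContinuousLinearMap.flip_apply,
    ContinuousLinearMap.lpPairing_eq_integral]
  refine integral_congr_ae ?_
  filter_upwards [hg.coeFn_toLp] with x hx
  simp [hx]

end Pairing

theorem measureReal_restrict_eq_self {s t : Set α} (h : s ⊆ t) :
    (μ.restrict t).real s = μ.real s := by
  simp only [Measure.real, Measure.restrict_eq_self μ h]

theorem memLp_one_sub_two_mul_indicator [IsFiniteMeasure μ] {I : Set α} (hI : MeasurableSet I)
    (q : ℝ≥0∞) : MemLp (fun x => (1 : ℝ) - 2 * I.indicator 1 x) q μ := by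
  refine .of_bound (by fun_prop (disch := exact hI)) 1 (ae_of_all _ fun x => ?_)
  by_cases hx : x ∈ I <;> norm_num [hx]

theorem integral_mul_one_sub_two_mul_indicator_of_ae_eq [IsFiniteMeasure μ] {J I : Set α}
    (hJ : MeasurableSet J) (hI : MeasurableSet I) {c : ℝ} {u : α → ℝ}
    (hu : u =ᵐ[μ] J.indicator (fun _ => c)) :
    ∫ x, u x * (1 - 2 * I.indicator 1 x) ∂μ = c * (μ.real J - 2 * μ.real (J ∩ I)) := by
  have hpt : (fun x => u x * (1 - 2 * I.indicator 1 x)) =ᵐ[μ]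
      fun x => c * (J.indicator 1 x - 2 * (J ∩ I).indicator 1 x) := by
    filter_upwards [hu] with x hx
    by_cases hxJ : x ∈ J <;> by_cases hxI : x ∈ I <;> simp [hx, hxJ, hxI]
  rw [integral_congr_ae hpt, integral_const_mul, integral_sub, integral_const_mul,
    integral_indicator_one hJ, integral_indicator_one (hJ.inter hI)]
  · exact (integrable_const 1).indicator hJ
  · exact ((integrable_const 1).indicator (hJ.inter hI)).const_mul 2

end MeasureTheory

open MeasureTheory

section MiddleThird

variable {T : ℝ}

theorem two_mul_volume_real_inter_middle_third_le {s : ℝ} (hs : s ∈ Icc 0 T) {J : Set ℝ}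
    (hJ : J = Ioo 0 s ∨ J = Ioo s T) :
    2 * volume.real (J ∩ Ioo (T / 3) (2 * T / 3)) ≤ volume.real J := by
  obtain ⟨hs0, hsT⟩ := hs
  rcases hJ with rfl | rfl <;>
  · rw [Ioo_inter_Ioo, Real.volume_real_Ioo, Real.volume_real_Ioo]
    simp only [max_def, min_def]
    split_ifs <;> linarith

theorem integral_mul_middle_third_weight_nonneg {s : ℝ} (hs : s ∈ Icc 0 T) {J : Set ℝ}
    (hJ : J = Ioo 0 s ∨ J = Ioo s T) {u : ℝ → ℝ}
    (hu : u =ᵐ[volume.restrict (Ioo 0 T)] J.indicator (fun _ => 1)) :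
    0 ≤ ∫ x, u x * (1 - 2 * (Ioo (T / 3) (2 * T / 3)).indicator 1 x)
      ∂volume.restrict (Ioo 0 T) := by
  have hJT : J ⊆ Ioo 0 T := by
    rcases hJ with rfl | rfl
    exacts [Ioo_subset_Ioo_right hs.2, Ioo_subset_Ioo_left hs.1]
  have hJ_meas : MeasurableSet J := by rcases hJ with rfl | rfl <;> exact measurableSet_Ioo
  rw [integral_mul_one_sub_two_mul_indicator_of_ae_eq hJ_meas measurableSet_Ioo hu,
    measureReal_restrict_eq_self hJT,
    measureReal_restrict_eq_self (inter_subset_left.trans hJT)]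
  linarith [two_mul_volume_real_inter_middle_third_le hs hJ]

theorem integral_mul_middle_third_weight_of_ae_eq (hT : 0 < T) {u : ℝ → ℝ}
    (hu : u =ᵐ[volume.restrict (Ioo 0 T)]
      fun t => if t ∈ Ioo (T / 3) (2 * T / 3) then (1 / 2 : ℝ) else 0) :
    ∫ x, u x * (1 - 2 * (Ioo (T / 3) (2 * T / 3)).indicator 1 x)
      ∂volume.restrict (Ioo 0 T) = -(T / 6) := by
  have hu_ind : u =ᵐ[volume.restrict (Ioo 0 T)] (Ioo (T / 3) (2 * T / 3)).indicator
      (fun _ => 1 / 2) :=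
    hu.trans (.of_eq (funext fun t => by simp only [indicator_apply]))
  rw [integral_mul_one_sub_two_mul_indicator_of_ae_eq measurableSet_Ioo measurableSet_Ioo hu_ind,
    inter_self, measureReal_restrict_eq_self (Ioo_subset_Ioo (by linarith) (by linarith)),
    Real.volume_real_Ioo_of_le (by linarith)]
  ring

end MiddleThird

theorem stmt_2
    (T : ℝ) (hT : 0 < T) (p : ℝ≥0∞) [Fact (1 ≤ p)] :
    ¬ ∃ w ∈ closure (convexHull ℝ
        {u : Lp ℝ p (volume.restrict (Ioo (0:ℝ) T)) |
          ∃ s ∈ Icc (0:ℝ) T,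
            ((u : ℝ → ℝ) =ᵐ[volume.restrict (Ioo (0:ℝ) T)]
              (Ioo (0:ℝ) s).indicator (fun _ => (1:ℝ))) ∨
            ((u : ℝ → ℝ) =ᵐ[volume.restrict (Ioo (0:ℝ) T)]
              (Ioo s T).indicator (fun _ => (1:ℝ)))}),
      (w : ℝ → ℝ) =ᵐ[volume.restrict (Ioo (0:ℝ) T)]
        (fun t => if t ∈ Ioo (T/3) (2*T/3) then (1/2 : ℝ) else 0) := by
  rintro ⟨w, hw, hw_eq⟩
  have : IsFiniteMeasure (volume.restrict (Ioo (0:ℝ) T)) :=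
    isFiniteMeasure_restrict.2 measure_Ioo_lt_top.ne
  have : Fact (1 ≤ p.conjExponent) := ⟨ENNReal.HolderConjugate.one_le _ p⟩
  set F := Lp.integralMulCLM p
    (memLp_one_sub_two_mul_indicator (μ := volume.restrict (Ioo 0 T))
      (measurableSet_Ioo (a := T / 3) (b := 2 * T / 3)) p.conjExponent)
  have hFw : F w = -(T / 6) := by
    rw [Lp.integralMulCLM_apply]
    exact integral_mul_middle_third_weight_of_ae_eq hT hw_eq
  refine absurd (F.nonneg_of_mem_closure_convexHull ?_ hw) (not_le.2 (by linarith))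
  rintro u ⟨s, hs, hu | hu⟩ <;> rw [Lp.integralMulCLM_apply]
  exacts [integral_mul_middle_third_weight_nonneg hs (.inl rfl) hu,
    integral_mul_middle_third_weight_nonneg hs (.inr rfl) hu]
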